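/- For d ≥ 3, and finite subsets A, B ⊆ Z^d, Cap(A ∪ B) ≤ Cap(A) + Cap(B) − χ₀(A,B), where χ₀(A,B) := Σ_{x ∈ A \ B} Σ_{y ∈ B} P_x(H_{A∪B}^+ = ∞) G(y−x) P_y(H_B^+ = ∞). -/

import Mathlib

open Filter Finset MeasureTheory
open scoped symmDiff ENNReal

namespace SRW

/-- Vertices of `ℤ^d`. -/
abbrev V (d : ℕ) : Type := Fin d → ℤ

/-- The set of nearest-neighbor steps (the `2d` unit vectors `±e_i`) in `ℤ^d`. -/
def steps (d : ℕ) : Finset (V d) :=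
  (Finset.univ : Finset (Fin d × Bool)).image
    (fun p j => if j = p.1 then (if p.2 then 1 else -1) else 0)

/-- Position at time `k` of the walk started at `x` with step sequence `s`. -/
def pos {d : ℕ} (x : V d) (s : ℕ → V d) (k : ℕ) : V d :=
  x + ∑ i ∈ Finset.range k, s i

open Classical in
/-- Probability, for the simple random walk, of an event depending on the
first `n` steps (steps beyond `n` are set to `0`): each of the `(2d)^n`
admissible step sequences has equal probability. -/
noncomputable def probN (d n : ℕ) (P : (ℕ → V d) → Prop) : ℝ :=
  (((Fintype.piFinset fun _ : Fin n => steps d).filter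
      (fun s => P fun i => if h : i < n then s ⟨i, h⟩ else 0)).card : ℝ) / ((2 * d : ℕ) : ℝ) ^ n

/-- Expectation of a functional of the first `n` steps of the walk. -/
noncomputable def expN (d n : ℕ) (f : (ℕ → V d) → ℝ) : ℝ :=
  (∑ s ∈ Fintype.piFinset fun _ : Fin n => steps d,
      f fun i => if h : i < n then s ⟨i, h⟩ else 0) / ((2 * d : ℕ) : ℝ) ^ n

/-- Escape probability `P_x(H_A^+ = ∞)`: the walk started at `x` never
hits `A` at a positive time (decreasing limit of the finite-horizon events). -/
noncomputable def esc (d : ℕ) (A : Set (V d)) (x : V d) : ℝ :=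
  ⨅ n : ℕ, probN d n (fun s => ∀ k, 1 ≤ k → k ≤ n → pos x s k ∉ A)

/-- Newtonian capacity `Cap(A) = Σ_{x∈A} P_x(H_A^+ = ∞)`. -/
noncomputable def cap {d : ℕ} (A : Finset (V d)) : ℝ :=
  ∑ x ∈ A, esc d (↑A) x

/-- Green's function `G(z) = Σ_n P_0(S_n = z)`. -/
noncomputable def G (d : ℕ) (z : V d) : ℝ :=
  ∑' n : ℕ, probN d n (fun s => pos 0 s n = z)

/-- Truncated Green's function `G_T(z) = Σ_{n≤T} P_0(S_n = z)`. -/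
noncomputable def GT (d T : ℕ) (z : V d) : ℝ :=
  ∑ n ∈ Finset.range (T + 1), probN d n (fun s => pos 0 s n = z)

/-- Convolution `(G ⋆ G_T)(x) = Σ_y G(x-y) G_T(y)`. -/
noncomputable def GconvGT (d T : ℕ) (x : V d) : ℝ :=
  ∑' y : V d, G d (x - y) * GT d T y

/-- Euclidean norm on `ℤ^d`. -/
noncomputable def nrm {d : ℕ} (x : V d) : ℝ :=
  Real.sqrt (∑ i, ((x i : ℝ)) ^ 2)

/-- The range `{S_k : k ∈ I}` of the walk started at `x` over the set of times `I`. -/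
noncomputable def rangeOn {d : ℕ} (x : V d) (s : ℕ → V d) (I : Finset ℕ) : Finset (V d) :=
  I.image (pos x s)

/-- Probability that the walk started at `z` hits both `A` and `B` in finite time
(increasing limit of the finite-horizon probabilities). -/
noncomputable def hitBothProb (d : ℕ) (A B : Finset (V d)) (z : V d) : ℝ :=
  ⨆ n : ℕ, probN d n (fun s => (∃ k ≤ n, pos z s k ∈ A) ∧ (∃ k ≤ n, pos z s k ∈ B))

/-- The discrete cube `Q(x,r) = [x - r/2, x + r/2)^d ∩ ℤ^d`. -/
def cube {d : ℕ} (x : V d) (r : ℝ) : Set (V d) :=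
  {y | ∀ i, (x i : ℝ) - r / 2 ≤ (y i : ℝ) ∧ (y i : ℝ) < (x i : ℝ) + r / 2}

/-- The corrector `ξ_n(T)`. -/
noncomputable def xi (d n T : ℕ) (s : ℕ → V d) : ℝ :=
  ∑ k ∈ Finset.range (n + 1), ∑ x ∈ rangeOn 0 s (Finset.Icc 0 k),
    esc d (↑(rangeOn 0 s (Finset.Icc 0 k))) x * (GconvGT d T (x - pos 0 s k) / T)

/-- The capacity cross-term `χ_C(A,B) = Cap(A) + Cap(B) - Cap(A ∪ B)`. -/
noncomputable def chiC {d : ℕ} (A B : Finset (V d)) : ℝ := cap A + cap B - cap (A ∪ B)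

open Classical in
/-- Conditional expectation, given the first `m` steps (equal to those of `s`),
of a functional of the first `n` steps. -/
noncomputable def condExpN (d n m : ℕ) (f : (ℕ → V d) → ℝ) (s : ℕ → V d) : ℝ :=
  expN d n (fun s' => if ∀ i < m, s' i = s i then f s' else 0) * ((2 * d : ℕ) : ℝ) ^ m

/-- The compensator `ξ_n^*(T)`. -/
noncomputable def xiStar (d n T : ℕ) (s : ℕ → V d) : ℝ :=
  (1 / (T : ℝ)) * ∑ j ∈ Finset.range T, ∑ l ∈ Finset.Icc 1 (n / T - 1),
    condExpN d (n + T) (j + l * T)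
      (fun s' => chiC (rangeOn 0 s' (Finset.Icc j (j + l * T)))
        (rangeOn 0 s' (Finset.Icc (j + l * T) (j + (l + 1) * T)))) s

/-- `E[Cap(R_n)]`, the expected capacity of the range up to time `n`. -/
noncomputable def expCapRange (d n : ℕ) : ℝ :=
  expN d n (fun s => cap (rangeOn 0 s (Finset.Icc 0 n)))

/-- The maximal capacity `c_n` of the range of a nearest-neighbor path with `n` steps. -/
noncomputable def maxPathCap (d n : ℕ) : ℝ :=
  sSup {y : ℝ | ∃ (x : V d) (s : ℕ → V d), (∀ i, s i ∈ steps d) ∧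
    y = cap (rangeOn x s (Finset.Icc 0 n))}

/-- `Γ(A,Λ) = Σ_{x∈A} Σ_{y∈Λ} G(y-x) P_y(H_Λ^+ = ∞)`. -/
noncomputable def GamFin (d : ℕ) (A : Finset (V d)) (Λ : Set (V d)) : ℝ :=
  ∑ x ∈ A, ∑' y : Λ, G d ((y : V d) - x) * esc d Λ (y : V d)

/-- `P(Γ(R̃_∞, Λ) > t)`, as the increasing limit of the finite-horizon probabilities. -/
noncomputable def PGam (d : ℕ) (Λ : Set (V d)) (t : ℝ) : ℝ :=
  ⨆ N : ℕ, probN d N (fun s => t < GamFin d (rangeOn 0 s (Finset.Icc 0 N)) Λ)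

/-- `E_x[Γ(R̃_∞, Λ)]`, as the increasing limit of the finite-horizon expectations. -/
noncomputable def EGam (d : ℕ) (x : V d) (Λ : Set (V d)) : ℝ :=
  ⨆ N : ℕ, expN d N (fun s => GamFin d (rangeOn x s (Finset.Icc 0 N)) Λ)

/-- The law of the first `n` steps of two independent simple random walks:
uniform measure on pairs of admissible step sequences of length `n`. -/
noncomputable def pairLevel (d n : ℕ) : Measure ((Fin n → V d) × (Fin n → V d)) :=
  (((2 * d : ℕ) : ℝ≥0∞) ^ (2 * n))⁻¹ •
    ∑ a ∈ Fintype.piFinset fun _ : Fin n => steps d,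
      ∑ b ∈ Fintype.piFinset fun _ : Fin n => steps d, Measure.dirac (a, b)

open Classical in
/-- `Γ(R̃_∞, R_∞) = Σ_{x ∈ R̃_∞} Σ_{y ∈ R_∞} G(y-x) P_y(H_{R_∞}^+ = ∞)` for
two (step sequences of) walks, with values in `ℝ≥0∞`. -/
noncomputable def gammaInf (d : ℕ) (sA sB : ℕ → V d) : ℝ≥0∞ :=
  ∑' x : V d, ∑' y : V d,
    if x ∈ Set.range (pos (0 : V d) sA) ∧ y ∈ Set.range (pos (0 : V d) sB) then
      ENNReal.ofReal (G d (y - x) * esc d (Set.range (pos (0 : V d) sB)) y)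
    else 0

/-!
Splitting `Cap(A ∪ B)` over `A` and `B`, and using that escaping `A ∪ B` implies escaping `A`,
it suffices to show `χ₀(A,B) ≤ Σ_{y∈B} (P_y(H_B^+ = ∞) - P_y(H_{A∪B}^+ = ∞))`.
For `x ∈ A \ B`, the last-exit decomposition gives `Σ_{y∈B} G(y-x) P_y(H_B^+ = ∞) ≤ P_x(H_B < ∞)`,
and decomposing at the first entrance into `B` and reversing time bounds this by
`Σ_n Σ_{y∈B} P_y(S_n = x, S_k ∉ B for 1 ≤ k ≤ n)`. After multiplying by `P_x(H_{A∪B}^+ = ∞)` and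
summing over `x ∈ A \ B`, the events left are those where the walk from `y` escapes `B` and makes
its last visit to `A ∪ B` at time `n` in `x`; together they make up the event of escaping `B` but
not `A ∪ B`. Everything is done at a finite horizon, where probabilities count step sequences,
and the horizon is sent to infinity at the end.
-/

lemma card_steps (d : ℕ) : (steps d).card = 2 * d := by
  rw [steps, card_image_of_injective, card_univ, Fintype.card_prod, Fintype.card_fin,
    Fintype.card_bool, mul_comm]
  rintro ⟨i, b⟩ ⟨j, c⟩ h
  obtain rfl : i = j := by
    by_contra hij
    have := congrFun h i
    rcases b <;> simp [hij] at this
  have := congrFun h i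
  rcases b <;> rcases c <;> simp_all

lemma neg_mem_steps {d : ℕ} {v : V d} (hv : v ∈ steps d) : -v ∈ steps d := by
  simp only [steps, mem_image] at hv ⊢
  obtain ⟨⟨i, b⟩, -, rfl⟩ := hv
  refine ⟨⟨i, !b⟩, mem_univ _, funext fun j => ?_⟩
  rcases b <;> by_cases hj : j = i <;> simp [hj]

def stepSeqs (d n : ℕ) : Finset (Fin n → V d) := Fintype.piFinset fun _ => steps d

def extendSteps {d n : ℕ} (s : Fin n → V d) : ℕ → V d := fun i => if h : i < n then s ⟨i, h⟩ else 0

def DependsOnFirst {d : ℕ} (n : ℕ) (P : (ℕ → V d) → Prop) : Prop :=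
  ∀ s t : ℕ → V d, (∀ i < n, s i = t i) → P s → P t

section Probability

open Classical

variable {d : ℕ}

lemma probN_eq_card (n : ℕ) (P : (ℕ → V d) → Prop) :
    probN d n P = ((stepSeqs d n).filter fun s => P (extendSteps s)).card /
      ((2 * d : ℕ) : ℝ) ^ n := rfl

lemma probN_nonneg (n : ℕ) (P : (ℕ → V d) → Prop) : 0 ≤ probN d n P := by
  rw [probN_eq_card]; positivity

lemma probN_congr {n : ℕ} {P Q : (ℕ → V d) → Prop} (h : ∀ s, P s ↔ Q s) :
    probN d n P = probN d n Q := by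
  rw [funext fun s => propext (h s)]

lemma probN_mono {n : ℕ} {P Q : (ℕ → V d) → Prop} (h : ∀ s, P s → Q s) :
    probN d n P ≤ probN d n Q := by
  simp only [probN_eq_card]
  gcongr with s
  exact h _

lemma probN_true (hd : 0 < d) (n : ℕ) : probN d n (fun _ => True) = 1 := by
  rw [probN_eq_card, filter_true, stepSeqs, Fintype.card_piFinset,
    prod_const, card_univ, Fintype.card_fin, card_steps, Nat.cast_pow]
  exact div_self (by positivity)

lemma probN_le_sum {ι : Type*} {n : ℕ} (I : Finset ι) (P : ι → (ℕ → V d) → Prop)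
    {R : (ℕ → V d) → Prop} (h : ∀ s, R s → ∃ i ∈ I, P i s) :
    probN d n R ≤ ∑ i ∈ I, probN d n (P i) := by
  simp only [probN_eq_card, ← sum_div]
  gcongr
  norm_cast
  refine (card_le_card fun s hs => ?_).trans card_biUnion_le
  obtain ⟨hs, hR⟩ := mem_filter.1 hs
  obtain ⟨i, hi, hP⟩ := h _ hR
  exact mem_biUnion.2 ⟨i, hi, mem_filter.2 ⟨hs, hP⟩⟩

lemma sum_probN_le {ι : Type*} {n : ℕ} (I : Finset ι) (P : ι → (ℕ → V d) → Prop)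
    {R : (ℕ → V d) → Prop} (hR : ∀ i ∈ I, ∀ s, P i s → R s)
    (hdisj : ∀ s, ∀ i ∈ I, ∀ j ∈ I, P i s → P j s → i = j) :
    ∑ i ∈ I, probN d n (P i) ≤ probN d n R := by
  simp only [probN_eq_card, ← sum_div]
  gcongr
  norm_cast
  have hpd : (I : Set ι).PairwiseDisjoint
      fun i => (stepSeqs d n).filter fun s => P i (extendSteps s) :=
    fun i hi j hj hij => disjoint_left.2 fun s hsi hsj =>
      hij (hdisj _ i hi j hj (mem_filter.1 hsi).2 (mem_filter.1 hsj).2)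
  rw [← card_biUnion hpd]
  refine card_le_card fun s hs => ?_
  obtain ⟨i, hi, hs⟩ := mem_biUnion.1 hs
  obtain ⟨hs, hP⟩ := mem_filter.1 hs
  exact mem_filter.2 ⟨hs, hR i hi _ hP⟩

lemma probN_and_not {n : ℕ} {P Q : (ℕ → V d) → Prop} (h : ∀ s, Q s → P s) :
    probN d n (fun s => P s ∧ ¬ Q s) = probN d n P - probN d n Q := by
  simp only [probN_eq_card, ← sub_div]
  congr 1
  rw [eq_sub_iff_add_eq]
  norm_cast
  simp only [card_filter, ← sum_add_distrib]
  refine sum_congr rfl fun s _ => ?_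
  have := h (extendSteps s)
  split_ifs <;> simp_all

lemma extendSteps_append_of_lt {n m : ℕ} (a : Fin n → V d) (b : Fin m → V d) {i : ℕ}
    (hi : i < n) : extendSteps (Fin.append a b) i = extendSteps a i := by
  simp only [extendSteps, dif_pos hi, dif_pos (hi.trans_le (Nat.le_add_right n m))]
  exact Fin.append_left a b ⟨i, hi⟩

lemma extendSteps_append_shift {n m : ℕ} (a : Fin n → V d) (b : Fin m → V d) :
    (fun i => extendSteps (Fin.append a b) (n + i)) = extendSteps b := by
  funext i
  by_cases hi : i < m
  · simp only [extendSteps, dif_pos hi, dif_pos (Nat.add_lt_add_left hi n)]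
    exact Fin.append_right a b ⟨i, hi⟩
  · simp [extendSteps, hi]

lemma probN_add_and_shift {n : ℕ} (m : ℕ) {P : (ℕ → V d) → Prop} (hP : DependsOnFirst n P)
    (Q : (ℕ → V d) → Prop) :
    probN d (n + m) (fun s => P s ∧ Q fun i => s (n + i)) = probN d n P * probN d m Q := by
  simp only [probN_eq_card]
  rw [div_mul_div_comm, ← pow_add, ← Nat.cast_mul, ← card_product, ← filter_product]
  congr 2
  refine card_equiv (Fin.appendEquiv n m).symm fun s => ?_
  obtain ⟨⟨a, b⟩, rfl⟩ := (Fin.appendEquiv n m).surjective s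
  rw [Equiv.symm_apply_apply, show Fin.appendEquiv n m (a, b) = Fin.append a b from rfl]
  have hPab : P (extendSteps (Fin.append a b)) ↔ P (extendSteps a) :=
    ⟨hP _ _ fun i hi => extendSteps_append_of_lt a b hi,
      hP _ _ fun i hi => (extendSteps_append_of_lt a b hi).symm⟩
  simp only [mem_filter, mem_product, extendSteps_append_shift, hPab, stepSeqs,
    Fintype.mem_piFinset, Fin.forall_fin_add, Fin.append_left, Fin.append_right]

lemma probN_add_of_dependsOnFirst (hd : 0 < d) {n : ℕ} (m : ℕ) {P : (ℕ → V d) → Prop}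
    (hP : DependsOnFirst n P) : probN d (n + m) P = probN d n P := by
  simpa [probN_true hd] using probN_add_and_shift m hP fun _ => True

end Probability

section Walk

variable {d : ℕ}

@[simp]
lemma pos_zero (x : V d) (s : ℕ → V d) : pos x s 0 = x := by
  simp [pos]

lemma pos_succ (x : V d) (s : ℕ → V d) (k : ℕ) : pos x s (k + 1) = pos x s k + s k := by
  simp only [pos, sum_range_succ, add_assoc]

lemma pos_eq_add_pos_zero (x : V d) (s : ℕ → V d) (k : ℕ) : pos x s k = x + pos 0 s k := by
  simp [pos]

lemma pos_congr (x : V d) {s t : ℕ → V d} {k : ℕ} (h : ∀ i < k, s i = t i) :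
    pos x s k = pos x t k := by
  unfold pos
  rw [sum_congr rfl fun i hi => h i (mem_range.1 hi)]

lemma dependsOnFirst_of_pos {n : ℕ} {P : (ℕ → V d) → Prop} (x : V d)
    (hP : ∀ s t, (∀ k ≤ n, pos x s k = pos x t k) → P s → P t) : DependsOnFirst n P :=
  fun s t h => hP s t fun _ hk => pos_congr x fun i hi => h i (by omega)

lemma pos_add (x : V d) (s : ℕ → V d) (n k : ℕ) :
    pos x s (n + k) = pos (pos x s n) (fun i => s (n + i)) k := by
  induction k with
  | zero => simp
  | succ k ih => rw [← add_assoc, pos_succ, ih, pos_succ]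

def revSteps {n : ℕ} (s : Fin n → V d) : Fin n → V d := fun i => -s i.rev

lemma revSteps_involutive (n : ℕ) : Function.Involutive (revSteps (d := d) (n := n)) := by
  intro s; funext i; simp [revSteps]

lemma revSteps_mem_stepSeqs_iff {n : ℕ} {s : Fin n → V d} :
    revSteps s ∈ stepSeqs d n ↔ s ∈ stepSeqs d n := by
  have hrev : ∀ t : Fin n → V d, t ∈ stepSeqs d n → revSteps t ∈ stepSeqs d n := fun t ht =>
    Fintype.mem_piFinset.2 fun i => neg_mem_steps (Fintype.mem_piFinset.1 ht i.rev)
  exact ⟨fun h => revSteps_involutive n s ▸ hrev _ h, hrev s⟩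

lemma pos_revSteps {n : ℕ} {x y : V d} {s : Fin n → V d} (hy : pos x (extendSteps s) n = y)
    {k : ℕ} (hk : k ≤ n) :
    pos y (extendSteps (revSteps s)) k = pos x (extendSteps s) (n - k) := by
  induction k with
  | zero => simpa using hy.symm
  | succ k ih =>
    obtain ⟨j, hj⟩ : ∃ j, n - k = j + 1 := ⟨n - k - 1, by omega⟩
    have hjn : j < n := by omega
    have hrev : extendSteps (revSteps s) k = -extendSteps s j := by
      simp only [extendSteps, dif_pos (Nat.lt_of_succ_le hk), dif_pos hjn, revSteps]
      congr 3
      ext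
      simp only [Fin.val_rev]
      omega
    rw [pos_succ, ih (Nat.le_of_succ_le hk), hj, pos_succ, hrev, show n - (k + 1) = j by omega]
    abel

open Classical in
lemma probN_reverse (n : ℕ) (x y : V d) (B : Set (V d)) :
    probN d n (fun s => pos x s n = y ∧ ∀ k < n, pos x s k ∉ B) =
      probN d n (fun s => pos y s n = x ∧ ∀ k, 1 ≤ k → k ≤ n → pos y s k ∉ B) := by
  simp only [probN_eq_card]
  congr 2
  refine card_equiv (revSteps_involutive n).toPerm fun s => ?_
  simp only [Function.Involutive.coe_toPerm, mem_filter, revSteps_mem_stepSeqs_iff]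
  refine and_congr_right fun _ => ⟨fun ⟨hy, hB⟩ => ⟨?_, fun k hk hkn => ?_⟩,
    fun ⟨hx, hB⟩ => ⟨?_, fun k hk => ?_⟩⟩
  · rw [pos_revSteps hy le_rfl, Nat.sub_self, pos_zero]
  · rw [pos_revSteps hy hkn]
    exact hB _ (by omega)
  · have := pos_revSteps hx le_rfl
    rwa [revSteps_involutive n s, Nat.sub_self, pos_zero] at this
  · have := pos_revSteps hx hk.le
    rw [revSteps_involutive n s] at this
    rw [this]
    exact hB _ (by omega) (by omega)

end Walk

noncomputable def escN (d : ℕ) (A : Set (V d)) (x : V d) (n : ℕ) : ℝ :=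
  probN d n fun s => ∀ k, 1 ≤ k → k ≤ n → pos x s k ∉ A

section Escape

variable {d : ℕ}

lemma bddBelow_range_escN (A : Set (V d)) (x : V d) : BddBelow (Set.range (escN d A x)) :=
  ⟨0, by rintro _ ⟨n, rfl⟩; exact probN_nonneg _ _⟩

lemma esc_nonneg (A : Set (V d)) (x : V d) : 0 ≤ esc d A x :=
  le_ciInf fun _ => probN_nonneg _ _

lemma esc_le_escN (A : Set (V d)) (x : V d) (n : ℕ) : esc d A x ≤ escN d A x n :=
  ciInf_le (bddBelow_range_escN A x) n

lemma esc_anti {A A' : Set (V d)} (h : A ⊆ A') (x : V d) : esc d A' x ≤ esc d A x :=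
  ciInf_mono (bddBelow_range_escN A' x) fun _ =>
    probN_mono fun _ hs k hk hkn hA => hs k hk hkn (h hA)

lemma escN_antitone (hd : 0 < d) (A : Set (V d)) (x : V d) : Antitone (escN d A x) := by
  refine antitone_nat_of_succ_le fun n => ?_
  have hdep : DependsOnFirst n fun s => ∀ k, 1 ≤ k → k ≤ n → pos x s k ∉ A :=
    dependsOnFirst_of_pos x fun s t h hs k hk hkn => h k hkn ▸ hs k hk hkn
  rw [escN, escN, ← probN_add_of_dependsOnFirst hd 1 hdep]
  exact probN_mono fun s hs k hk hkn => hs k hk (by omega)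

lemma tendsto_escN (hd : 0 < d) (A : Set (V d)) (x : V d) :
    Tendsto (escN d A x) atTop (nhds (esc d A x)) :=
  tendsto_atTop_ciInf (escN_antitone hd A x) (bddBelow_range_escN A x)

lemma probN_and_avoid_after {C : Set (V d)} {x y : V d} {n N : ℕ} (hnN : n ≤ N)
    {P : (ℕ → V d) → Prop} (hP : DependsOnFirst n P) (hPy : ∀ s, P s → pos x s n = y) :
    probN d N (fun s => P s ∧ ∀ k, n < k → k ≤ N → pos x s k ∉ C) =
      probN d n P * escN d C y (N - n) := by
  obtain ⟨m, rfl⟩ := Nat.exists_eq_add_of_le hnN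
  rw [Nat.add_sub_cancel_left, escN, ← probN_add_and_shift m hP]
  refine probN_congr fun s => and_congr_right fun hs => ?_
  rw [← hPy s hs]
  refine ⟨fun h j hj hjm => ?_, fun h k hk hkN => ?_⟩
  · rw [← pos_add]
    exact h (n + j) (by omega) (by omega)
  · have := h (k - n) (by omega) (by omega)
    rwa [← pos_add, Nat.add_sub_cancel' hk.le] at this

lemma eq_of_lastVisit {C : Set (V d)} {x : V d} {s : ℕ → V d} {N n n' : ℕ} (hn : n ≤ N)
    (hn' : n' ≤ N) (hC : pos x s n ∈ C) (hC' : pos x s n' ∈ C)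
    (h : ∀ k, n < k → k ≤ N → pos x s k ∉ C) (h' : ∀ k, n' < k → k ≤ N → pos x s k ∉ C) :
    n = n' :=
  le_antisymm (not_lt.1 fun hlt => h' n hlt hn hC) (not_lt.1 fun hlt => h n' hlt hn' hC')

end Escape

section Decompositions

variable {d : ℕ}

/-- Decomposition at the last visit to `B` before time `M`. -/
lemma sum_probN_pos_eq_mul_esc_le (B : Finset (V d)) (x : V d) (M : ℕ) :
    ∑ y ∈ B, ∑ n ∈ range M, probN d n (fun s => pos x s n = y) * esc d B y ≤
      probN d M fun s => ∃ n < M, pos x s n ∈ (B : Set (V d)) := by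
  rw [← sum_product']
  calc _ ≤ ∑ p ∈ B ×ˢ range M, probN d M fun s =>
          pos x s p.2 = p.1 ∧ ∀ k, p.2 < k → k ≤ M → pos x s k ∉ (B : Set (V d)) := by
        refine sum_le_sum fun p hp => ?_
        have hpM : p.2 ≤ M := (mem_range.1 (mem_product.1 hp).2).le
        rw [probN_and_avoid_after hpM
          (dependsOnFirst_of_pos x fun s t h hs => (h p.2 le_rfl) ▸ hs) fun _ => id]
        exact mul_le_mul_of_nonneg_left (esc_le_escN _ _ _) (probN_nonneg _ _)
    _ ≤ _ := by
        refine sum_probN_le _ _ (fun p hp s hs => ⟨p.2, mem_range.1 (mem_product.1 hp).2, ?_⟩)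
          fun s p hp q hq hps hqs => ?_
        · rw [hs.1]; exact mem_coe.2 (mem_product.1 hp).1
        · simp only [mem_product, mem_range] at hp hq
          have hn := eq_of_lastVisit hp.2.le hq.2.le (hps.1 ▸ mem_coe.2 hp.1)
            (hqs.1 ▸ mem_coe.2 hq.1) hps.2 hqs.2
          exact Prod.ext (hps.1.symm.trans (hn ▸ hqs.1)) hn

/-- Decomposition at the first visit to `B`, each piece reversed in time. -/
lemma probN_exists_pos_mem_le_sum (hd : 0 < d) (B : Finset (V d)) (x : V d) (M : ℕ) :
    (probN d M fun s => ∃ n < M, pos x s n ∈ (B : Set (V d))) ≤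
      ∑ n ∈ range M, ∑ y ∈ B, probN d n fun s =>
        pos y s n = x ∧ ∀ k, 1 ≤ k → k ≤ n → pos y s k ∉ (B : Set (V d)) := by
  rw [← sum_product']
  calc _ ≤ ∑ p ∈ range M ×ˢ B, probN d M fun s =>
          pos x s p.1 = p.2 ∧ ∀ k < p.1, pos x s k ∉ (B : Set (V d)) := by
        refine probN_le_sum _ _ fun s hs => ?_
        classical
        refine ⟨(Nat.find hs, pos x s (Nat.find hs)), ?_, rfl, fun k hk hkB => ?_⟩
        · exact mem_product.2 ⟨mem_range.2 (Nat.find_spec hs).1, (Nat.find_spec hs).2⟩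
        · exact Nat.find_min hs hk ⟨hk.trans (Nat.find_spec hs).1, hkB⟩
    _ = _ := by
        refine sum_congr rfl fun p hp => ?_
        obtain ⟨m, hm⟩ := Nat.exists_eq_add_of_le (mem_range.1 (mem_product.1 hp).1).le
        rw [hm, probN_add_of_dependsOnFirst hd m, probN_reverse]
        exact dependsOnFirst_of_pos x fun s t h ⟨hs, hsB⟩ =>
          ⟨h p.1 le_rfl ▸ hs, fun k hk => h k hk.le ▸ hsB k hk⟩

/-- Decomposition at the last visit to `A ∪ B`, which lies in `A \ B` when the walk from
`y ∈ B` escapes `B`. -/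
lemma sum_probN_mul_esc_le_escN_sub (A B : Finset (V d)) {y : V d} (hy : y ∈ B) {M N : ℕ}
    (hMN : M ≤ N) :
    ∑ n ∈ range M, ∑ x ∈ A \ B, (probN d n fun s =>
        pos y s n = x ∧ ∀ k, 1 ≤ k → k ≤ n → pos y s k ∉ (B : Set (V d))) *
          esc d ↑(A ∪ B) x ≤
      escN d B y N - escN d ↑(A ∪ B) y N := by
  have hBAB : (B : Set (V d)) ⊆ ↑(A ∪ B) := coe_subset.2 subset_union_right
  rw [← sum_product', escN, escN, ← probN_and_not fun s hs k hk hkN hB =>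
    hs k hk hkN (hBAB hB)]
  calc _ ≤ ∑ p ∈ range M ×ˢ (A \ B), probN d N fun s =>
          (pos y s p.1 = p.2 ∧ ∀ k, 1 ≤ k → k ≤ p.1 → pos y s k ∉ (B : Set (V d))) ∧
            ∀ k, p.1 < k → k ≤ N → pos y s k ∉ (↑(A ∪ B) : Set (V d)) := by
        refine sum_le_sum fun p hp => ?_
        have hpN : p.1 ≤ N := (mem_range.1 (mem_product.1 hp).1).le.trans hMN
        rw [probN_and_avoid_after hpN (dependsOnFirst_of_pos y fun s t h ⟨hs, hsB⟩ =>
          ⟨h p.1 le_rfl ▸ hs, fun k hk hkn => h k hkn ▸ hsB k hk hkn⟩) fun _ => And.left]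
        exact mul_le_mul_of_nonneg_left (esc_le_escN _ _ _) (probN_nonneg _ _)
    _ ≤ _ := by
        have hmem : ∀ p ∈ range M ×ˢ (A \ B), p.1 < M ∧ p.2 ∈ (↑(A ∪ B) : Set (V d)) ∧
            p.2 ∉ B := fun p hp => by
          simp only [mem_product, mem_range, Finset.mem_sdiff] at hp
          exact ⟨hp.1, by simp [hp.2.1], hp.2.2⟩
        refine sum_probN_le _ _ (fun p hp s ⟨⟨hs, hsB⟩, hsAB⟩ => ⟨fun k hk hkN => ?_, ?_⟩)
          fun s p hp q hq hps hqs => ?_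
        · rcases le_or_gt k p.1 with hkp | hkp
          · exact hsB k hk hkp
          · exact fun hkB => hsAB k hkp hkN (hBAB hkB)
        · obtain ⟨hpM, hpAB, hpB⟩ := hmem p hp
          have hp0 : 1 ≤ p.1 := Nat.one_le_iff_ne_zero.2 fun h0 => by
            rw [h0, pos_zero] at hs
            exact hpB (hs ▸ hy)
          exact fun h => h p.1 hp0 (hpM.le.trans hMN) (hs ▸ hpAB)
        · obtain ⟨hpM, hpAB, -⟩ := hmem p hp
          obtain ⟨hqM, hqAB, -⟩ := hmem q hq
          have hn := eq_of_lastVisit (hpM.le.trans hMN) (hqM.le.trans hMN)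
            (hps.1.1 ▸ hpAB) (hqs.1.1 ▸ hqAB) hps.2 hqs.2
          exact Prod.ext hn (hps.1.1.symm.trans (hn ▸ hqs.1.1))

end Decompositions

lemma sum_tsum_le_of_sum_range_le {ι : Type*} {s : Finset ι} {f : ι → ℕ → ℝ} {c : ℝ}
    (hf : ∀ i n, 0 ≤ f i n) (h : ∀ M, ∑ i ∈ s, ∑ n ∈ range M, f i n ≤ c) :
    ∑ i ∈ s, ∑' n, f i n ≤ c := by
  have hsum : Summable fun n => ∑ i ∈ s, f i n :=
    summable_of_sum_range_le (fun n => sum_nonneg fun i _ => hf i n) fun M => by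
      rw [sum_comm]; exact h M
  have hsummable : ∀ i ∈ s, Summable (f i) := fun i hi =>
    hsum.of_nonneg_of_le (hf i) fun n => single_le_sum (fun j _ => hf j n) hi
  rw [← Summable.tsum_finsetSum hsummable]
  exact Real.tsum_le_of_sum_range_le (fun n => sum_nonneg fun i _ => hf i n) fun M => by
    rw [sum_comm]; exact h M

section Capacity

variable {d : ℕ}

lemma probN_pos_zero_eq_sub (n : ℕ) (x y : V d) :
    (probN d n fun s => pos 0 s n = y - x) = probN d n fun s => pos x s n = y :=
  probN_congr fun s => by rw [pos_eq_add_pos_zero x, eq_sub_iff_add_eq', eq_comm]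

/-- Finite-horizon form of `χ₀(A,B) ≤ Σ_{y∈B} (P_y(H_B^+ = ∞) - P_y(H_{A∪B}^+ = ∞))`. -/
lemma sum_esc_mul_probN_mul_esc_le (hd : 0 < d) (A B : Finset (V d)) (M : ℕ) :
    ∑ x ∈ A \ B, ∑ y ∈ B, ∑ n ∈ range M,
        esc d ↑(A ∪ B) x * probN d n (fun s => pos x s n = y) * esc d B y ≤
      ∑ y ∈ B, (esc d B y - esc d ↑(A ∪ B) y) := by
  refine ge_of_tendsto (tendsto_finsetSum B fun y _ =>
    (tendsto_escN hd _ y).sub (tendsto_escN hd _ y)) (eventually_atTop.2 ⟨M, fun N hMN => ?_⟩)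
  calc _ = ∑ x ∈ A \ B, esc d ↑(A ∪ B) x *
          ∑ y ∈ B, ∑ n ∈ range M, probN d n (fun s => pos x s n = y) * esc d B y := by
        simp only [mul_sum, mul_assoc]
    _ ≤ ∑ x ∈ A \ B, esc d ↑(A ∪ B) x * ∑ n ∈ range M, ∑ y ∈ B, probN d n fun s =>
          pos y s n = x ∧ ∀ k, 1 ≤ k → k ≤ n → pos y s k ∉ (B : Set (V d)) := by
        gcongr with x
        · exact esc_nonneg _ _
        · exact (sum_probN_pos_eq_mul_esc_le B x M).trans
            (probN_exists_pos_mem_le_sum hd B x M)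
    _ = ∑ y ∈ B, ∑ n ∈ range M, ∑ x ∈ A \ B, (probN d n fun s =>
          pos y s n = x ∧ ∀ k, 1 ≤ k → k ≤ n → pos y s k ∉ (B : Set (V d))) *
            esc d ↑(A ∪ B) x := by
        simp only [mul_comm (esc d _ _), sum_mul]
        rw [sum_comm, sum_congr rfl fun n _ => sum_comm, sum_comm]
    _ ≤ _ := sum_le_sum fun y hy => sum_probN_mul_esc_le_escN_sub A B hy hMN

end Capacity

lemma cap_union_le_cap_add_sum {d : ℕ} (A B : Finset (V d)) :
    cap (A ∪ B) ≤ cap A + ∑ y ∈ B, esc d ↑(A ∪ B) y := by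
  have hinter : 0 ≤ ∑ x ∈ A ∩ B, esc d ↑(A ∪ B) x := sum_nonneg fun _ _ => esc_nonneg _ _
  calc cap (A ∪ B) ≤ ∑ x ∈ A, esc d ↑(A ∪ B) x + ∑ y ∈ B, esc d ↑(A ∪ B) y := by
        rw [cap, ← sum_union_inter]; linarith
    _ ≤ cap A + ∑ y ∈ B, esc d ↑(A ∪ B) y := by
        gcongr
        exact sum_le_sum fun x _ => esc_anti (coe_subset.2 subset_union_left) x

/-- One-sided decomposition: `Cap(A ∪ B) ≤ Cap(A) + Cap(B) - χ₀(A,B)` where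
`χ₀(A,B) = Σ_{x ∈ A \ B} Σ_{y ∈ B} P_x(H_{A∪B}^+ = ∞) G(y-x) P_y(H_B^+ = ∞)`. -/
theorem cap_union_le_chi0 {d : ℕ} (hd : 3 ≤ d) (A B : Finset (V d)) :
    cap (A ∪ B) ≤ cap A + cap B -
      ∑ x ∈ A \ B, ∑ y ∈ B, esc d (↑(A ∪ B)) x * G d (y - x) * esc d (↑B) y := by
  have hχ : ∑ x ∈ A \ B, ∑ y ∈ B, esc d (↑(A ∪ B)) x * G d (y - x) * esc d (↑B) y ≤
      ∑ y ∈ B, (esc d B y - esc d ↑(A ∪ B) y) := by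
    simp only [G, ← tsum_mul_left, ← tsum_mul_right, probN_pos_zero_eq_sub]
    rw [← sum_product']
    refine sum_tsum_le_of_sum_range_le (fun _ _ => mul_nonneg (mul_nonneg (esc_nonneg _ _)
      (probN_nonneg _ _)) (esc_nonneg _ _)) fun M => ?_
    rw [sum_product]
    exact sum_esc_mul_probN_mul_esc_le (by omega) A B M
  rw [sum_sub_distrib, ← cap] at hχ
  linarith [cap_union_le_cap_add_sum A B]

end SRW
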